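/- arXiv:2106.02724 — 4 statements merged into one kernel-verified Lean document; each statement's English description precedes it below -/
import Mathlib

section
/- The space of ranked tree shapes with n leaves is in bijection with the space of (n-1)×(n-1) lower triangular matrices of non-negative integers F satisfying: (1) F_{i,i} = i+1 for all i, and F_{i+1,i} = i for all i ≤ n-2; (2) max{0, F_{i-1,1} - 1} ≤ F_{i,1} ≤ F_{i-1,1} for i = 3,...,n-1; (3) for i = 4,...,n-1 and k = 2,...,i-2: max{0, F_{i,k-1}} ≤ F_{i,k}, F_{i-1,k} - 1 ≤ F_{i,k} ≤ F_{i-1,k}, and F_{i,k-1} + F_{i-1,k} - F_{i-1,k-1} - 1 ≤ F_{i,k} ≤ F_{i,k-1} + F_{i-1,k} - F_{i-1,k-1}. -/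
/-- `IsFMat n F` says that `F` (indexed from 1) is an F-matrix for ranked tree
shapes with `n` leaves: an `(n-1)×(n-1)` lower-triangular matrix of
non-negative integers satisfying the diagonal, subdiagonal, first-column and
general difference constraints. Entries outside `{1,…,n-1}²` or above the
diagonal are `0`. -/
def IsFMat (n : ℕ) (F : ℕ → ℕ → ℤ) : Prop :=
  (∀ i j, 0 ≤ F i j) ∧
  (∀ i j, ¬(1 ≤ j ∧ j ≤ i ∧ i ≤ n - 1) → F i j = 0) ∧
  (∀ i, 1 ≤ i → i ≤ n - 1 → F i i = (i : ℤ) + 1) ∧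
  (∀ i, 1 ≤ i → i ≤ n - 2 → F (i + 1) i = (i : ℤ)) ∧
  (∀ i, 3 ≤ i → i ≤ n - 1 → max 0 (F (i - 1) 1 - 1) ≤ F i 1 ∧ F i 1 ≤ F (i - 1) 1) ∧
  (∀ i k, 4 ≤ i → i ≤ n - 1 → 2 ≤ k → k ≤ i - 2 →
    max 0 (F i (k - 1)) ≤ F i k ∧
    F (i - 1) k - 1 ≤ F i k ∧ F i k ≤ F (i - 1) k ∧
    F i (k - 1) + F (i - 1) k - F (i - 1) (k - 1) - 1 ≤ F i k ∧
    F i k ≤ F i (k - 1) + F (i - 1) k - F (i - 1) (k - 1))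

/-- `IsDMat n D` says that `D` encodes a ranked tree shape with `n` leaves:
`D i j ∈ {0,1,2}` is the number of branches created at the `(j+1)`-st split
that have not yet bifurcated by the end of interval `i`.  `D` is an
`(n-1)×(n-1)` lower-triangular matrix (indexed from 1) with `D i i = 2`,
columns decreasing by at most one at each step, and exactly one column
decreasing at each step. -/
def IsDMat (n : ℕ) (D : ℕ → ℕ → ℤ) : Prop :=
  (∀ i j, 0 ≤ D i j ∧ D i j ≤ 2) ∧
  (∀ i j, ¬(1 ≤ j ∧ j ≤ i ∧ i ≤ n - 1) → D i j = 0) ∧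
  (∀ i, 1 ≤ i → i ≤ n - 1 → D i i = 2) ∧
  (∀ i j, 2 ≤ i → i ≤ n - 1 → 1 ≤ j → j ≤ i - 1 →
    D (i - 1) j - 1 ≤ D i j ∧ D i j ≤ D (i - 1) j) ∧
  (∀ i, 2 ≤ i → i ≤ n - 1 → ∃! j, 1 ≤ j ∧ j ≤ i - 1 ∧ D (i - 1) j - D i j = 1)

/-- The cumulative-sum map sending a `D`-matrix to its `F`-matrix,
`F i j = ∑_{k=1}^{j} D i k` (and `0` outside the lower-triangular index range). -/
def cumSum (n : ℕ) (D : ℕ → ℕ → ℤ) : ℕ → ℕ → ℤ := fun i j =>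
  if 1 ≤ j ∧ j ≤ i ∧ i ≤ n - 1 then ∑ k ∈ Finset.Icc 1 j, D i k else 0


/-- A ranked tree shape with `n` leaves: a rooted binary tree with unlabelled
leaves and ranked internal nodes, encoded (faithfully, as in the paper) by the
matrix `D` where `D i j ∈ {0,1,2}` is the number of children of the `(j+1)`-st
internal node not yet bifurcated at the `i`-th interval. -/
def RankedTreeShape (n : ℕ) := {D : ℕ → ℕ → ℤ // IsDMat n D}


/-- telescoping -/
lemma telescope_sum (g : ℕ → ℤ) (h0 : g 0 = 0) (m : ℕ) :
    ∑ k ∈ Finset.Icc 1 m, (g k - g (k - 1)) = g m := by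
  induction m with
  | zero => simp [h0]
  | succ m ih =>
      rw [Finset.sum_Icc_succ_top (by omega : 1 ≤ m + 1), ih]
      simp

lemma uniq_one (s : Finset ℕ) (f : ℕ → ℤ) (h0 : ∀ x ∈ s, 0 ≤ f x)
    (hs : ∑ x ∈ s, f x = 1) : ∃! j, j ∈ s ∧ f j = 1 := by
  have hex : ∃ a ∈ s, 0 < f a := by
    by_contra h; push_neg at h
    have : ∑ x ∈ s, f x ≤ 0 := Finset.sum_nonpos (fun x hx => h x hx)
    omega
  obtain ⟨a, ha, hfa⟩ := hex
  have hsplit : f a + ∑ x ∈ s.erase a, f x = ∑ x ∈ s, f x :=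
    Finset.add_sum_erase s f ha
  have hrnn : 0 ≤ ∑ x ∈ s.erase a, f x :=
    Finset.sum_nonneg (fun x hx => h0 x (Finset.mem_of_mem_erase hx))
  have hfa1 : f a = 1 := by omega
  refine ⟨a, ⟨ha, hfa1⟩, ?_⟩
  rintro b ⟨hb, hfb⟩
  by_contra hne
  have hb' : b ∈ s.erase a := Finset.mem_erase.2 ⟨hne, hb⟩
  have : f b ≤ ∑ x ∈ s.erase a, f x :=
    Finset.single_le_sum (fun x hx => h0 x (Finset.mem_of_mem_erase hx)) hb'
  omega

/-- row sums of a D matrix -/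
lemma rowsum {n : ℕ} {D : ℕ → ℕ → ℤ} (hD : IsDMat n D) :
    ∀ i, 1 ≤ i → i ≤ n - 1 → ∑ k ∈ Finset.Icc 1 i, D i k = (i : ℤ) + 1 := by
  obtain ⟨hb, hz, hdiag, hstep, huniq⟩ := hD
  intro i h1
  induction i, h1 using Nat.le_induction with
  | base => intro h; simp [hdiag 1 le_rfl h]
  | succ i hi ih =>
    intro h
    have hstep' : ∀ j, 1 ≤ j → j ≤ i → D i j - 1 ≤ D (i+1) j ∧ D (i+1) j ≤ D i j := by
      intro j hj1 hj2
      have := hstep (i+1) j (by omega) h hj1 (by omega)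
      simpa using this
    have hu := huniq (i+1) (by omega) h
    simp only [Nat.add_sub_cancel] at hu
    obtain ⟨j, ⟨hj1, hj2, hj3⟩, hju⟩ := hu
    have hdrop : ∑ k ∈ Finset.Icc 1 i, (D i k - D (i+1) k) = 1 := by
      rw [Finset.sum_eq_single_of_mem j (Finset.mem_Icc.2 ⟨hj1, hj2⟩)]
      · exact hj3
      · intro k hk hkj
        rw [Finset.mem_Icc] at hk
        have h4 := hstep' k hk.1 hk.2
        have hne : D i k - D (i+1) k ≠ 1 := fun hh => hkj (hju k ⟨hk.1, hk.2, hh⟩)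
        omega
    have hsub : ∑ k ∈ Finset.Icc 1 i, D (i+1) k
        = ∑ k ∈ Finset.Icc 1 i, D i k - 1 := by
      have := Finset.sum_sub_distrib (s := Finset.Icc 1 i)
        (f := fun k => D i k) (g := fun k => D (i+1) k)
      omega
    rw [Finset.sum_Icc_succ_top (by omega : 1 ≤ i + 1), hsub,
      ih (by omega), hdiag (i+1) (by omega) h]
    push_cast; ring

/-- partial drop sums between consecutive rows are 0 or 1 -/
lemma drops {n : ℕ} {D : ℕ → ℕ → ℤ} (hD : IsDMat n D) (i m : ℕ)
    (h1 : 1 ≤ i) (hn : i + 1 ≤ n - 1) (hm : m ≤ i) :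
    0 ≤ ∑ k ∈ Finset.Icc 1 m, (D i k - D (i+1) k) ∧
      ∑ k ∈ Finset.Icc 1 m, (D i k - D (i+1) k) ≤ 1 := by
  have hrs := rowsum hD
  obtain ⟨hb, hz, hdiag, hstep, huniq⟩ := hD
  have hstep' : ∀ j, 1 ≤ j → j ≤ i → D i j - 1 ≤ D (i+1) j ∧ D (i+1) j ≤ D i j := by
    intro j hj1 hj2
    have := hstep (i+1) j (by omega) hn hj1 (by omega)
    simpa using this
  have hnn : ∀ k ∈ Finset.Icc 1 m, 0 ≤ D i k - D (i+1) k := by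
    intro k hk; rw [Finset.mem_Icc] at hk
    have := hstep' k hk.1 (by omega); omega
  have hfull : ∑ k ∈ Finset.Icc 1 i, (D i k - D (i+1) k) = 1 := by
    have h1' : ∑ k ∈ Finset.Icc 1 (i+1), D (i+1) k = (i : ℤ) + 2 := by
      have := hrs (i+1) (by omega) hn; push_cast at this ⊢; linarith
    have h2' : ∑ k ∈ Finset.Icc 1 i, D (i+1) k = (i : ℤ) := by
      rw [Finset.sum_Icc_succ_top (by omega : 1 ≤ i + 1)] at h1'
      have := hdiag (i+1) (by omega) hn
      omega
    have h3' := hrs i h1 (by omega)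
    have := Finset.sum_sub_distrib (s := Finset.Icc 1 i)
      (f := fun k => D i k) (g := fun k => D (i+1) k)
    omega
  constructor
  · exact Finset.sum_nonneg hnn
  · calc ∑ k ∈ Finset.Icc 1 m, (D i k - D (i+1) k)
        ≤ ∑ k ∈ Finset.Icc 1 i, (D i k - D (i+1) k) := by
          apply Finset.sum_le_sum_of_subset_of_nonneg
          · exact Finset.Icc_subset_Icc_right hm
          · intro k hk _; rw [Finset.mem_Icc] at hk
            have := hstep' k hk.1 hk.2; omega
      _ = 1 := hfull

lemma isFMat_cumSum {n : ℕ} {D : ℕ → ℕ → ℤ} (hD : IsDMat n D) :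
    IsFMat n (cumSum n D) := by
  have hrs := rowsum hD
  have hdr := drops hD
  obtain ⟨hb, hz, hdiag, hstep, huniq⟩ := hD
  refine ⟨?_, ?_, ?_, ?_, ?_, ?_⟩
  · intro i j
    unfold cumSum
    split_ifs
    · exact Finset.sum_nonneg fun k _ => (hb i k).1
    · exact le_refl 0
  · intro i j h; simp [cumSum, h]
  · intro i h1 h2
    rw [cumSum, if_pos ⟨h1, le_rfl, h2⟩]
    exact hrs i h1 h2
  · intro i h1 h2
    have hin : i + 1 ≤ n - 1 := by omega
    rw [cumSum, if_pos ⟨h1, by omega, hin⟩]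
    have h1' := hrs (i+1) (by omega) hin
    rw [Finset.sum_Icc_succ_top (by omega : 1 ≤ i + 1)] at h1'
    have := hdiag (i+1) (by omega) hin
    push_cast at h1' ⊢
    linarith
  · intro i h3 hn1
    have e1 : cumSum n D i 1 = D i 1 := by
      rw [cumSum, if_pos ⟨le_rfl, by omega, hn1⟩]; simp
    have e2 : cumSum n D (i-1) 1 = D (i-1) 1 := by
      rw [cumSum, if_pos ⟨le_rfl, by omega, by omega⟩]; simp
    have hs := hstep i 1 (by omega) hn1 le_rfl (by omega)
    have h0 : 0 ≤ D i 1 := (hb i 1).1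
    rw [e1, e2]
    constructor
    · exact max_le (by omega) (by omega)
    · exact hs.2
  · intro i k h4 hn1 hk2 hki
    obtain ⟨i, rfl⟩ : ∃ i', i = i' + 1 := ⟨i - 1, by omega⟩
    obtain ⟨k, rfl⟩ : ∃ k', k = k' + 1 := ⟨k - 1, by omega⟩
    simp only [Nat.add_sub_cancel]
    have hk1 : 1 ≤ k := by omega
    have hki' : k + 1 ≤ i - 1 := by omega
    have hii : i ≤ n - 1 := by omega
    have e1 : cumSum n D (i+1) (k+1) = ∑ j ∈ Finset.Icc 1 k, D (i+1) j + D (i+1) (k+1) := by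
      rw [cumSum, if_pos ⟨by omega, by omega, hn1⟩,
        Finset.sum_Icc_succ_top (by omega : 1 ≤ k + 1)]
    have e2 : cumSum n D (i+1) k = ∑ j ∈ Finset.Icc 1 k, D (i+1) j := by
      rw [cumSum, if_pos ⟨hk1, by omega, hn1⟩]
    have e3 : cumSum n D i (k+1) = ∑ j ∈ Finset.Icc 1 k, D i j + D i (k+1) := by
      rw [cumSum, if_pos ⟨by omega, by omega, hii⟩,
        Finset.sum_Icc_succ_top (by omega : 1 ≤ k + 1)]
    have e4 : cumSum n D i k = ∑ j ∈ Finset.Icc 1 k, D i j := by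
      rw [cumSum, if_pos ⟨hk1, by omega, hii⟩]
    have hd1 := hdr i (k+1) (by omega) (by omega) (by omega)
    have hsub : ∑ j ∈ Finset.Icc 1 (k+1), (D i j - D (i+1) j)
        = (∑ j ∈ Finset.Icc 1 k, D i j + D i (k+1))
          - (∑ j ∈ Finset.Icc 1 k, D (i+1) j + D (i+1) (k+1)) := by
      rw [Finset.sum_Icc_succ_top (by omega : 1 ≤ k + 1)]
      have := Finset.sum_sub_distrib (s := Finset.Icc 1 k)
        (f := fun j => D i j) (g := fun j => D (i+1) j)
      omega
    rw [hsub] at hd1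
    have hstep1 := hstep (i+1) (k+1) (by omega) hn1 (by omega) (by omega)
    simp only [Nat.add_sub_cancel] at hstep1
    have hDnn : 0 ≤ D (i+1) (k+1) := (hb (i+1) (k+1)).1
    have hAnn : 0 ≤ ∑ j ∈ Finset.Icc 1 k, D (i+1) j :=
      Finset.sum_nonneg fun j _ => (hb (i+1) j).1
    rw [e1, e2, e3, e4]
    refine ⟨max_le (by omega) (by omega), by omega, by omega, by omega, by omega⟩

def diffMat (n : ℕ) (F : ℕ → ℕ → ℤ) : ℕ → ℕ → ℤ := fun i j =>
  if 1 ≤ j ∧ j ≤ i ∧ i ≤ n - 1 then F i j - F i (j - 1) else 0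

section Backward

variable {n : ℕ} {F : ℕ → ℕ → ℤ} (hF : IsFMat n F)

include hF

lemma fzero0 (i : ℕ) : F i 0 = 0 := hF.2.1 i 0 (by omega)

lemma fsubdiag (i : ℕ) (h2 : 2 ≤ i) (hin : i ≤ n - 1) :
    F i (i - 1) = (i : ℤ) - 1 := by
  obtain ⟨i, rfl⟩ : ∃ i', i = i' + 1 := ⟨i - 1, by omega⟩
  simp only [Nat.add_sub_cancel]
  rw [hF.2.2.2.1 i (by omega) (by omega)]
  push_cast; ring

/-- bounds between consecutive rows of differences -/
lemma fdiff_bounds (i k : ℕ) (h1 : 1 ≤ i) (hn : i + 1 ≤ n - 1)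
    (hk1 : 1 ≤ k) (hki : k ≤ i) :
    F i k - F i (k-1) - 1 ≤ F (i+1) k - F (i+1) (k-1) ∧
      F (i+1) k - F (i+1) (k-1) ≤ F i k - F i (k-1) := by
  have hsd := fsubdiag hF
  obtain ⟨f0, fz, fdiag, fsub, fcol, fgen⟩ := hF
  have hz0 : ∀ m, F m 0 = 0 := fun m => fz m 0 (by omega)
  rcases eq_or_lt_of_le hki with rfl | hlt
  · -- k = i  (here `i` has been replaced by `k`)
    have hFt : F (k+1) k = (k : ℤ) := fsub k h1 (by omega)
    have hFkk : F k k = (k : ℤ) + 1 := fdiag k h1 (by omega)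
    rcases Nat.lt_or_ge k 2 with hi1 | hi2
    · -- k = 1
      interval_cases k
      have h21 : F 2 1 = 1 := by have := fsub 1 le_rfl (by omega); simpa using this
      have h11 : F 1 1 = 2 := by have := fdiag 1 le_rfl (by omega); simpa using this
      simp only [hz0]
      omega
    · -- k ≥ 2
      have hFkm1 : F k (k-1) = (k : ℤ) - 1 := hsd k hi2 (by omega)
      have hbnd : (k : ℤ) - 2 ≤ F (k+1) (k-1) ∧ F (k+1) (k-1) ≤ (k : ℤ) - 1 := by
        rcases Nat.lt_or_ge k 3 with hi2' | hi3
        · -- k = 2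
          interval_cases k
          have h21 : F 2 1 = 1 := by have := fsub 1 le_rfl (by omega); simpa using this
          have := fcol 3 (by omega) (by omega)
          simp only [show (3:ℕ) - 1 = 2 from rfl] at this
          rw [h21] at this
          have hm := le_max_right (0:ℤ) (F 2 1 - 1)
          norm_num at this ⊢
          omega
        · -- k ≥ 3
          have hg := fgen (k+1) (k-1) (by omega) hn (by omega) (by omega)
          simp only [Nat.add_sub_cancel] at hg
          rw [hFkm1] at hg
          exact ⟨by omega, by omega⟩
      rw [hFt, hFkk, hFkm1]
      exact ⟨by omega, by omega⟩
  · -- k < i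
    rcases Nat.lt_or_ge k 2 with hk' | hk2
    · -- k = 1
      interval_cases k
      have := fcol (i+1) (by omega) hn
      simp only [Nat.add_sub_cancel] at this
      have hm := le_max_right (0:ℤ) (F i 1 - 1)
      simp only [hz0]
      exact ⟨by omega, by omega⟩
    · -- 2 ≤ k ≤ i-1
      have hg := fgen (i+1) k (by omega) hn hk2 (by omega)
      simp only [Nat.add_sub_cancel] at hg
      exact ⟨by omega, by omega⟩

/-- nonnegativity of differences -/
lemma fdiff_nonneg (i k : ℕ) (hk1 : 1 ≤ k) (hki : k ≤ i) (hin : i ≤ n - 1) :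
    0 ≤ F i k - F i (k-1) := by
  have hsd := fsubdiag hF
  obtain ⟨f0, fz, fdiag, fsub, fcol, fgen⟩ := hF
  have hz0 : ∀ m, F m 0 = 0 := fun m => fz m 0 (by omega)
  rcases Nat.lt_or_ge k 2 with hk' | hk2
  · interval_cases k
    have := f0 i 1
    simp only [hz0]
    omega
  · -- k ≥ 2, so i ≥ 2
    rcases eq_or_lt_of_le hki with rfl | hlt
    · -- k = i (i replaced by k)
      have hFkk : F k k = (k : ℤ) + 1 := fdiag k (by omega) hin
      have hFkm1 : F k (k-1) = (k : ℤ) - 1 := hsd k (by omega) hin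
      omega
    · rcases Nat.lt_or_ge k (i-1) with hlt2 | hge
      · -- 2 ≤ k ≤ i-2, i ≥ 4
        have hg := fgen i k (by omega) hin hk2 (by omega)
        have := le_max_right (0:ℤ) (F i (k-1))
        omega
      · -- k = i - 1, i ≥ 3
        have hke : k = i - 1 := by omega
        subst hke
        have hi3 : 3 ≤ i := by omega
        have hFim1 : F i (i-1) = (i : ℤ) - 1 := hsd i (by omega) hin
        have hub : F i (i-1-1) ≤ (i : ℤ) - 2 := by
          rcases Nat.lt_or_ge i 4 with hi' | hi4
          · interval_cases i
            have h21 : F 2 1 = 1 := by have := fsub 1 le_rfl (by omega); simpa using this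
            have := fcol 3 (by omega) (by omega)
            simp only [show (3:ℕ) - 1 = 2 from rfl] at this
            rw [h21] at this
            norm_num
            omega
          · have hFsub2 : F (i-1) (i-2) = (i : ℤ) - 2 := by
              have := hsd (i-1) (by omega) (by omega)
              have e : i - 1 - 1 = i - 2 := by omega
              rw [e] at this
              rw [this]; push_cast [Nat.cast_sub (by omega : 1 ≤ i)]; ring
            have hg := fgen i (i-2) hi4 hin (by omega) (by omega)
            have e : i - 1 - 1 = i - 2 := by omega
            rw [e, ← hFsub2]
            exact hg.2.2.1
        omega

/-- diagonal differences equal 2 -/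
lemma fdiff_diag (i : ℕ) (h1 : 1 ≤ i) (hin : i ≤ n - 1) :
    F i i - F i (i-1) = 2 := by
  have hsd := fsubdiag hF
  obtain ⟨f0, fz, fdiag, fsub, fcol, fgen⟩ := hF
  have hFii : F i i = (i : ℤ) + 1 := fdiag i h1 hin
  rcases Nat.lt_or_ge i 2 with hi' | hi2
  · interval_cases i
    have h0 : F 1 0 = 0 := fz 1 0 (by omega)
    norm_num at hFii ⊢
    omega
  · have hFim1 : F i (i-1) = (i : ℤ) - 1 := hsd i hi2 hin
    omega

/-- differences bounded by 2 -/
lemma fdiff_le_two : ∀ i k, 1 ≤ k → k ≤ i → i ≤ n - 1 →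
    F i k - F i (k-1) ≤ 2 := by
  intro i
  induction i using Nat.strong_induction_on with
  | _ i ih =>
    intro k hk1 hki hin
    rcases eq_or_lt_of_le hki with rfl | hlt
    · exact le_of_eq (fdiff_diag hF k hk1 hin)
    · obtain ⟨i, rfl⟩ : ∃ i', i = i' + 1 := ⟨i - 1, by omega⟩
      have hb := fdiff_bounds hF i k (by omega) hin hk1 (by omega)
      have := ih i (by omega) k hk1 (by omega) (by omega)
      omega

end Backward

lemma isDMat_diffMat {n : ℕ} {F : ℕ → ℕ → ℤ} (hF : IsFMat n F) :
    IsDMat n (diffMat n F) := by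
  refine ⟨?_, ?_, ?_, ?_, ?_⟩
  · intro i j
    unfold diffMat
    split_ifs with h
    · exact ⟨fdiff_nonneg hF i j h.1 h.2.1 h.2.2,
        fdiff_le_two hF i j h.1 h.2.1 h.2.2⟩
    · norm_num
  · intro i j h; simp [diffMat, h]
  · intro i h1 h2
    rw [diffMat]
    simp only [if_pos (⟨h1, le_rfl, h2⟩ : 1 ≤ i ∧ i ≤ i ∧ i ≤ n - 1)]
    exact fdiff_diag hF i h1 h2
  · intro i j h2 hn hj1 hj2
    obtain ⟨i, rfl⟩ : ∃ i', i = i' + 1 := ⟨i - 1, by omega⟩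
    simp only [Nat.add_sub_cancel]
    have hb := fdiff_bounds hF i j (by omega) hn hj1 (by omega)
    rw [diffMat, diffMat,
      if_pos (⟨hj1, by omega, hn⟩ : 1 ≤ j ∧ j ≤ i + 1 ∧ i + 1 ≤ n - 1),
      if_pos (⟨hj1, by omega, by omega⟩ : 1 ≤ j ∧ j ≤ i ∧ i ≤ n - 1)]
    exact hb
  · intro i h2 hn
    obtain ⟨i, rfl⟩ : ∃ i', i = i' + 1 := ⟨i - 1, by omega⟩
    simp only [Nat.add_sub_cancel]
    have hz0 : ∀ m, F m 0 = 0 := fzero0 hF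
    have htel : ∀ r m, 1 ≤ r → r ≤ n - 1 → m ≤ r →
        ∑ k ∈ Finset.Icc 1 m, (diffMat n F r k) = F r m := by
      intro r m hr1 hr2 hm
      rw [Finset.sum_congr rfl (fun k hk => ?_), telescope_sum (F r) (hz0 r) m]
      rw [Finset.mem_Icc] at hk
      rw [diffMat, if_pos ⟨hk.1, by omega, hr2⟩]
    have hsum : ∑ k ∈ Finset.Icc 1 i, (diffMat n F i k - diffMat n F (i+1) k) = 1 := by
      have e1 := htel i i (by omega) (by omega) le_rfl
      have e2 := htel (i+1) i (by omega) hn (by omega)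
      have e3 : F i i = (i : ℤ) + 1 := hF.2.2.1 i (by omega) (by omega)
      have e4 : F (i+1) i = (i : ℤ) := hF.2.2.2.1 i (by omega) (by omega)
      have := Finset.sum_sub_distrib (s := Finset.Icc 1 i)
        (f := fun k => diffMat n F i k) (g := fun k => diffMat n F (i+1) k)
      omega
    have hnn : ∀ x ∈ Finset.Icc 1 i, 0 ≤ diffMat n F i x - diffMat n F (i+1) x := by
      intro x hx; rw [Finset.mem_Icc] at hx
      have hb := fdiff_bounds hF i x (by omega) hn hx.1 hx.2
      rw [diffMat, diffMat,
        if_pos (⟨hx.1, by omega, hn⟩ : 1 ≤ x ∧ x ≤ i + 1 ∧ i + 1 ≤ n - 1),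
        if_pos (⟨hx.1, by omega, by omega⟩ : 1 ≤ x ∧ x ≤ i ∧ i ≤ n - 1)]
      omega
    have := uniq_one (Finset.Icc 1 i) (fun x => diffMat n F i x - diffMat n F (i+1) x)
      hnn hsum
    simpa [Finset.mem_Icc, and_assoc] using this

lemma left_inv_aux {n : ℕ} {D : ℕ → ℕ → ℤ} (hD : IsDMat n D) (i j : ℕ) :
    diffMat n (cumSum n D) i j = D i j := by
  by_cases h : 1 ≤ j ∧ j ≤ i ∧ i ≤ n - 1
  · rw [diffMat, if_pos h, cumSum, if_pos h]
    rcases Nat.lt_or_ge j 2 with hj' | hj2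
    · have hj1 : j = 1 := by omega
      subst hj1
      rw [cumSum]
      rw [if_neg (by omega)]
      simp
    · obtain ⟨j, rfl⟩ : ∃ j', j = j' + 1 := ⟨j - 1, by omega⟩
      simp only [Nat.add_sub_cancel]
      rw [cumSum, if_pos ⟨by omega, by omega, h.2.2⟩,
        Finset.sum_Icc_succ_top (by omega : 1 ≤ j + 1)]
      ring
  · rw [diffMat, if_neg h, hD.2.1 i j h]

lemma right_inv_aux {n : ℕ} {F : ℕ → ℕ → ℤ} (hF : IsFMat n F) (i j : ℕ) :
    cumSum n (diffMat n F) i j = F i j := by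
  by_cases h : 1 ≤ j ∧ j ≤ i ∧ i ≤ n - 1
  · rw [cumSum, if_pos h]
    rw [Finset.sum_congr rfl (fun k hk => ?_),
      telescope_sum (F i) (fzero0 hF i) j]
    rw [Finset.mem_Icc] at hk
    rw [diffMat, if_pos ⟨hk.1, by omega, h.2.2⟩]
  · rw [cumSum, if_neg h, hF.2.1 i j h]

/-- The space of ranked tree shapes with `n` leaves is in
bijection with the space of `(n-1)×(n-1)` F-matrices. -/
theorem rankedTreeShape_equiv_fmat (n : ℕ) (hn : 2 ≤ n) :
    Nonempty (RankedTreeShape n ≃ {F : ℕ → ℕ → ℤ // IsFMat n F}) := by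
  exact ⟨{ toFun := fun D => ⟨cumSum n D.1, isFMat_cumSum D.2⟩
           invFun := fun F => ⟨diffMat n F.1, isDMat_diffMat F.2⟩
           left_inv := fun D => Subtype.ext
             (funext fun i => funext fun j => left_inv_aux D.2 i j)
           right_inv := fun F => Subtype.ext
             (funext fun i => funext fun j => right_inv_aux F.2 i j) }⟩
end

section
/- The matrix F^(unb) defined by F^(unb)_{i,j} = j for 1 ≤ j ≤ i-1 and F^(unb)_{i,i} = i+1 is an entrywise upper bound for all F-matrices: for every F ∈ F_n and all indices i,j ≤ n-1, F_{i,j} ≤ F^(unb)_{i,j}. -/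
/-- The F-matrix of the most unbalanced (caterpillar) ranked tree shape:
`F i j = j` below the diagonal and `F i i = i + 1`. -/
def Funb (n : ℕ) : ℕ → ℕ → ℤ := fun i j =>
  if 1 ≤ j ∧ j ≤ i ∧ i ≤ n - 1 then (if j = i then (i : ℤ) + 1 else (j : ℤ)) else 0

/-- The F-matrix of the most balanced ranked tree shape:
`F i j = max {0, 2j - i + 1}` for `j ≤ i`. -/
def Fbal (n : ℕ) : ℕ → ℕ → ℤ := fun i j =>
  if 1 ≤ j ∧ j ≤ i ∧ i ≤ n - 1 then max 0 (2 * (j : ℤ) - (i : ℤ) + 1) else 0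

/-- The `d₁` (entrywise L1) distance between two F-matrices. -/
def d1 (n : ℕ) (F G : ℕ → ℕ → ℤ) : ℤ :=
  ∑ i ∈ Finset.Icc 1 (n - 1), ∑ j ∈ Finset.Icc 1 (n - 1), |F i j - G i j|

/-- The `d₂` (entrywise L2) distance between two F-matrices. -/
noncomputable def d2 (n : ℕ) (F G : ℕ → ℕ → ℤ) : ℝ :=
  Real.sqrt (∑ i ∈ Finset.Icc 1 (n - 1), ∑ j ∈ Finset.Icc 1 (n - 1),
    ((F i j - G i j : ℤ) : ℝ) ^ 2)


lemma fmat_below_diag (n : ℕ) (F : ℕ → ℕ → ℤ) (hF : IsFMat n F) (j : ℕ) (hj : 1 ≤ j) :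
    ∀ i, j + 1 ≤ i → (i ≤ n - 1) → F i j ≤ (j : ℤ) := by
  obtain ⟨hpos, hzero, hdiag, hsub, hcol, hgen⟩ := hF
  intro i hi1
  induction i, hi1 using Nat.le_induction with
  | base =>
    intro hle
    rw [hsub j hj (by omega)]
  | succ i hi ih =>
    intro hle
    have h1 : F (i + 1) j ≤ F i j := by
      rcases eq_or_lt_of_le hj with h | h
      · have := hcol (i + 1) (by omega) hle
        simpa [← h] using this.2
      · have := hgen (i + 1) j (by omega) hle (by omega) (by omega)
        simpa using this.2.2.1
    exact h1.trans (ih (by omega))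

/-- The caterpillar F-matrix `F^(unb)` is an entrywise upper
bound on all F-matrices. -/
theorem funb_entrywise_max (n : ℕ) (hn : 2 ≤ n) (F : ℕ → ℕ → ℤ) (hF : IsFMat n F) :
    ∀ i j, i ≤ n - 1 → j ≤ n - 1 → F i j ≤ Funb n i j := by
  intro i j hi hj
  unfold Funb
  split
  · rename_i hcond
    obtain ⟨h1, h2, h3⟩ := hcond
    split
    · rename_i hji
      subst hji
      rw [hF.2.2.1 j h1 h3]
    · rename_i hji
      exact fmat_below_diag n F hF j h1 i (by omega) h3
  · rename_i hcond
    rw [hF.2.1 i j hcond]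
end

section
/- The matrix F^(bal) defined by F^(bal)_{i,j} = max{0, 2j - i + 1} for j ≤ i is an entrywise lower bound for all F-matrices: for every F ∈ F_n and all indices i,j ≤ n-1, F^(bal)_{i,j} ≤ F_{i,j}. Consequently, the pair (F^(unb), F^(bal)) attains the maximum d_1 and d_2 distances among all pairs of F-matrices in F_n, where d_1 is the entrywise L1 distance and d_2 the entrywise L2 distance. -/
lemma fmat_lower (n : ℕ) (F : ℕ → ℕ → ℤ) (hF : IsFMat n F) :
    ∀ i j, 1 ≤ j → j ≤ i → i ≤ n - 1 → 2 * (j : ℤ) - (i : ℤ) + 1 ≤ F i j := by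
  obtain ⟨hpos, hz, hdiag, hsub, hcol, hgen⟩ := hF
  intro i
  induction i using Nat.strong_induction_on with
  | _ i ih =>
    intro j hj1 hji hin
    rcases eq_or_lt_of_le hji with rfl | hlt
    · have := hdiag j hj1 hin; omega
    rcases eq_or_lt_of_le (Nat.succ_le_of_lt hlt) with heq | hlt2
    · have := hsub j hj1 (by omega)
      rw [← heq]; try simp only [Nat.succ_eq_add_one]
      omega
    · by_cases hj : j = 1
      · subst hj
        have h1 := ih (i - 1) (by omega) 1 le_rfl (by omega) (by omega)
        have h2 := (hcol i (by omega) hin).1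
        have h3 := le_trans (le_max_right 0 (F (i - 1) 1 - 1)) h2
        omega
      · have h1 := ih (i - 1) (by omega) j hj1 (by omega) (by omega)
        have h2 := (hgen i j (by omega) hin (by omega) (by omega)).2.1
        omega

lemma fmat_upper (n : ℕ) (F : ℕ → ℕ → ℤ) (hF : IsFMat n F) :
    ∀ i j, 1 ≤ j → j + 1 ≤ i → i ≤ n - 1 → F i j ≤ (j : ℤ) := by
  obtain ⟨hpos, hz, hdiag, hsub, hcol, hgen⟩ := hF
  intro i
  induction i using Nat.strong_induction_on with
  | _ i ih =>
    intro j hj1 hji hin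
    rcases eq_or_lt_of_le hji with heq | hlt2
    · have := hsub j hj1 (by omega)
      rw [← heq]; try simp only [Nat.succ_eq_add_one]
      omega
    · by_cases hj : j = 1
      · subst hj
        have h1 := ih (i - 1) (by omega) 1 le_rfl (by omega) (by omega)
        have h2 := (hcol i (by omega) hin).2
        omega
      · have h1 := ih (i - 1) (by omega) j hj1 (by omega) (by omega)
        have h2 := (hgen i j (by omega) hin (by omega) (by omega)).2.2.1
        omega

lemma fbal_le (n : ℕ) (F : ℕ → ℕ → ℤ) (hF : IsFMat n F) (i j : ℕ) :
    Fbal n i j ≤ F i j := by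
  unfold Fbal
  split
  · next h =>
    exact max_le (hF.1 i j) (fmat_lower n F hF i j h.1 h.2.1 h.2.2)
  · exact hF.1 i j

lemma funb_ge (n : ℕ) (F : ℕ → ℕ → ℤ) (hF : IsFMat n F) (i j : ℕ) :
    F i j ≤ Funb n i j := by
  unfold Funb
  split
  · next h =>
    by_cases hji : j = i
    · subst hji
      rw [if_pos rfl, hF.2.2.1 j h.1 h.2.2]
    · rw [if_neg hji]
      exact fmat_upper n F hF i j h.1 (by omega) h.2.2
  · next h =>
    rw [hF.2.1 i j h]

lemma entry_abs (n : ℕ) (F G : ℕ → ℕ → ℤ) (hF : IsFMat n F) (hG : IsFMat n G)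
    (i j : ℕ) : |F i j - G i j| ≤ |Funb n i j - Fbal n i j| := by
  have h1 := fbal_le n F hF i j
  have h2 := funb_ge n F hF i j
  have h3 := fbal_le n G hG i j
  have h4 := funb_ge n G hG i j
  have h5 : |F i j - G i j| ≤ Funb n i j - Fbal n i j :=
    abs_sub_le_iff.mpr ⟨by linarith, by linarith⟩
  exact h5.trans (le_abs_self _)

/-- The balanced F-matrix `F^(bal)` is an entrywise lower bound
on all F-matrices; consequently the pair `(F^(unb), F^(bal))` attains the
maximum `d₁` and `d₂` distances among all pairs of F-matrices. -/
theorem fbal_entrywise_min_and_max_distance (n : ℕ) (hn : 2 ≤ n) :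
    (∀ F : ℕ → ℕ → ℤ, IsFMat n F → ∀ i j, i ≤ n - 1 → j ≤ n - 1 →
      Fbal n i j ≤ F i j) ∧
    (∀ F G : ℕ → ℕ → ℤ, IsFMat n F → IsFMat n G →
      d1 n F G ≤ d1 n (Funb n) (Fbal n) ∧ d2 n F G ≤ d2 n (Funb n) (Fbal n)) := by
  constructor
  · intro F hF i j _ _
    exact fbal_le n F hF i j
  · intro F G hF hG
    constructor
    · unfold d1
      refine Finset.sum_le_sum fun i _ => Finset.sum_le_sum fun j _ => ?_
      exact entry_abs n F G hF hG i j
    · unfold d2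
      apply Real.sqrt_le_sqrt
      refine Finset.sum_le_sum fun i _ => Finset.sum_le_sum fun j _ => ?_
      have h := entry_abs n F G hF hG i j
      have h2 : |F i j - G i j| ^ 2 ≤ |Funb n i j - Fbal n i j| ^ 2 :=
        pow_le_pow_left₀ (abs_nonneg _) h 2
      rw [sq_abs, sq_abs] at h2
      exact_mod_cast h2
end

section
/- Under the Yule (Kingman coalescent) distribution on ranked tree shapes with n leaves, the expected value of the (i,j) entry of the F-matrix is E[F_{ij}] = j(j+1)/i, for 1 ≤ j ≤ i ≤ n-1. -/
open scoped Classical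

/-- Collapse the pair of lineage labels `{a, b}`: the larger label is merged
into the smaller one and all larger labels are shifted down by one. -/
def collapse (a b x : ℕ) : ℕ :=
  if x = max a b then min a b else if max a b < x then x - 1 else x

/-- The lineage map of the coalescent after `s` merge events: `chainMap n ω s i`
is the label of the lineage currently containing leaf `i`, where `ω` lists the
pair of lineages merged at each step. -/
def chainMap (n : ℕ) (ω : Fin (n - 1) → Fin n × Fin n) : ℕ → Fin n → ℕ
  | 0 => fun i => (i : ℕ)
  | s + 1 => fun i =>
      if h : s < n - 1 then
        collapse ((ω ⟨s, h⟩).1 : ℕ) ((ω ⟨s, h⟩).2 : ℕ) (chainMap n ω s i)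
      else chainMap n ω s i

/-- `ω` is a valid sequence of coalescent merge choices: at step `s` (when
`n - s` lineages remain) an unordered pair of the `n - s` current lineages is
chosen. -/
def ValidSeq (n : ℕ) (ω : Fin (n - 1) → Fin n × Fin n) : Prop :=
  ∀ s : Fin (n - 1), ((ω s).1 : ℕ) < ((ω s).2 : ℕ) ∧ ((ω s).2 : ℕ) < n - (s : ℕ)

/-- The sample space of the Yule / Kingman coalescent with `n` leaves: all
sequences of merge choices, each such sequence being equally likely (at every
step a uniformly chosen pair of the extant lineages merges). -/
noncomputable def coalSpace (n : ℕ) : Finset (Fin (n - 1) → Fin n × Fin n) :=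
  Finset.univ.filter (ValidSeq n)

/-- The block (set of leaves) of the lineage containing leaf `i` when `k`
lineages remain. -/
noncomputable def blockOf (n : ℕ) (ω : Fin (n - 1) → Fin n × Fin n) (k : ℕ)
    (i : Fin n) : Finset (Fin n) :=
  Finset.univ.filter (fun j => chainMap n ω (n - k) j = chainMap n ω (n - k) i)

/-- `Zext n ω i k`: leaf `i` is still an external branch (a singleton lineage)
when `k` lineages remain. -/
def Zext (n : ℕ) (ω : Fin (n - 1) → Fin n × Fin n) (i : Fin n) (k : ℕ) : Prop :=
  blockOf n ω k i = {i}

/-- The partition (set of blocks) of the leaves when `k` lineages remain. -/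
noncomputable def blocksAt (n : ℕ) (ω : Fin (n - 1) → Fin n × Fin n) (k : ℕ) :
    Finset (Finset (Fin n)) :=
  Finset.univ.image (fun i => blockOf n ω k i)

/-- The F-matrix of the ranked tree shape generated by the coalescent `ω`:
`FmatOf n ω i j` is the number of branches extant when `j + 1` branches are
present that have not yet bifurcated by the interval with `i + 1` branches,
i.e. the number of common blocks of the partitions into `j + 1` and `i + 1`
lineages. -/
noncomputable def FmatOf (n : ℕ) (ω : Fin (n - 1) → Fin n × Fin n) (i j : ℕ) : ℕ :=
  (blocksAt n ω (j + 1) ∩ blocksAt n ω (i + 1)).card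

/-- The D-matrix entry `D i j = F i j - F i (j-1)`: the number of children of
the node creating the `(j+1)`-st branch that have not bifurcated by interval
`i`. -/
noncomputable def DmatOf (n : ℕ) (ω : Fin (n - 1) → Fin n × Fin n) (i j : ℕ) : ℤ :=
  (FmatOf n ω i j : ℤ) - (FmatOf n ω i (j - 1) : ℤ)

/-- Probability of an event under the Yule / Kingman coalescent with `n`
leaves (uniform measure on merge-choice sequences). -/
noncomputable def coalP (n : ℕ) (A : (Fin (n - 1) → Fin n × Fin n) → Prop) : ℝ :=
  (((coalSpace n).filter A).card : ℝ) / ((coalSpace n).card : ℝ)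

/-- Expectation of a random variable under the Yule / Kingman coalescent with
`n` leaves. -/
noncomputable def coalE (n : ℕ) (X : (Fin (n - 1) → Fin n × Fin n) → ℝ) : ℝ :=
  (∑ ω ∈ coalSpace n, X ω) / ((coalSpace n).card : ℝ)

/-!
`F_{ij}` counts the `i + 1` lineages present after `n - (i + 1)` merges that take part in none of
the next `i - j` merges, so by linearity `E[F_{ij}] = (i + 1) p`, where `p` is the probability that
one fixed lineage survives these merges. When `k` lineages are present, the merged pair is uniform
among `k.choose 2` pairs, `(k - 1).choose 2` of which avoid the fixed lineage, independently of
the past. The product of these ratios telescopes to `p = (j + 1).choose 2 / (i + 1).choose 2`,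
and `(i + 1) p = j (j + 1) / i`.
-/

open Finset Function

theorem Finset.card_filter_update_mul_card {ι α : Type*} [DecidableEq ι] {S : Finset (ι → α)}
    {P : Finset α} {s : ι} {Q : (ι → α) → α → Prop} [∀ ω, DecidablePred (Q ω)] {c : ℕ}
    (hS : ∀ ω ∈ S, ∀ a, update ω s a ∈ S ↔ a ∈ P)
    (hQ : ∀ ω a, Q (update ω s a) = Q ω) (hc : ∀ ω ∈ S, #{a ∈ P | Q ω a} = c) :
    #{ω ∈ S | Q ω (ω s)} * #P = #S * c := by
  have swap_mem : ∀ ω ∈ S, ∀ a ∈ P, update ω s a ∈ S ∧ ω s ∈ P := fun ω hω a ha =>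
    ⟨(hS ω hω a).2 ha, (hS ω hω (ω s)).1 (by rwa [update_eq_self])⟩
  -- `(ω, a) ↦ (update ω s a, ω s)` is an involution of `S ×ˢ P` exchanging the two conditions
  have hswap : #{x ∈ S ×ˢ P | Q x.1 x.2} = #{x ∈ S ×ˢ P | Q x.1 (x.1 s)} := by
    refine card_nbij' (fun x => (update x.1 s x.2, x.1 s)) (fun x => (update x.1 s x.2, x.1 s))
      ?_ ?_ ?_ ?_
    · rintro ⟨ω, a⟩ hx
      simp only [coe_filter, mem_product, Set.mem_ofPred_eq] at hx ⊢
      exact ⟨swap_mem ω hx.1.1 a hx.1.2, by rw [hQ, update_self]; exact hx.2⟩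
    · rintro ⟨ω, a⟩ hx
      simp only [coe_filter, mem_product, Set.mem_ofPred_eq] at hx ⊢
      exact ⟨swap_mem ω hx.1.1 a hx.1.2, by rw [hQ]; exact hx.2⟩
    all_goals rintro ⟨ω, a⟩ -; simp
  calc #{ω ∈ S | Q ω (ω s)} * #P = #{x ∈ S ×ˢ P | Q x.1 (x.1 s)} := by
        rw [filter_product_left (fun ω => Q ω (ω s)), card_product]
    _ = ∑ ω ∈ S, #{a ∈ P | Q ω a} := by
        rw [← hswap, card_filter, sum_product]; simp only [card_filter]
    _ = #S * c := by rw [sum_congr rfl hc, sum_const, smul_eq_mul]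

lemma collapse_of_lt {a b : ℕ} (hab : a < b) (x : ℕ) :
    collapse a b x = if x = b then a else if b < x then x - 1 else x := by
  simp [collapse, max_eq_right hab.le, min_eq_left hab.le]

lemma collapse_lt {a b x k : ℕ} (hab : a < b) (hb : b < k) (hx : x < k) :
    collapse a b x < k - 1 := by
  rw [collapse_of_lt hab]; split_ifs <;> omega

lemma exists_collapse_eq {a b y k : ℕ} (hab : a < b) (hy : y < k - 1) :
    ∃ x < k, collapse a b x = y := by
  rcases lt_or_ge y b with h | h
  · exact ⟨y, by omega, by rw [collapse_of_lt hab]; split_ifs <;> omega⟩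
  · exact ⟨y + 1, by omega, by rw [collapse_of_lt hab]; split_ifs <;> omega⟩

lemma eq_of_collapse_eq {a b x y : ℕ} (hab : a < b) (hya : y ≠ a) (hyb : y ≠ b)
    (h : collapse a b x = collapse a b y) : x = y := by
  rw [collapse_of_lt hab, collapse_of_lt hab] at h
  split_ifs at h <;> omega

lemma collapse_add_sub {a b x : ℕ} (hab : a < b) (hx : x = a ∨ x = b) :
    collapse a b (a + b - x) = collapse a b x := by
  rw [collapse_of_lt hab, collapse_of_lt hab]; split_ifs <;> omega

def mergedAt (n : ℕ) (ω : Fin (n - 1) → Fin n × Fin n) (s : ℕ) : ℕ × ℕ :=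
  if h : s < n - 1 then ((ω ⟨s, h⟩).1, (ω ⟨s, h⟩).2) else (0, 1)

def relabel (n : ℕ) (ω : Fin (n - 1) → Fin n × Fin n) (s : ℕ) : ℕ → ℕ :=
  collapse (mergedAt n ω s).1 (mergedAt n ω s).2

/-- The label, after `t + r` merges, of the lineage labelled `ℓ` after `t` merges. -/
def labelTrace (n : ℕ) (ω : Fin (n - 1) → Fin n × Fin n) (t ℓ : ℕ) : ℕ → ℕ
  | 0 => ℓ
  | r + 1 => relabel n ω (t + r) (labelTrace n ω t ℓ r)

def Survives (n : ℕ) (ω : Fin (n - 1) → Fin n × Fin n) (t ℓ m : ℕ) : Prop :=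
  ∀ r < m, labelTrace n ω t ℓ r ≠ (mergedAt n ω (t + r)).1 ∧
    labelTrace n ω t ℓ r ≠ (mergedAt n ω (t + r)).2

noncomputable def labelFiber (n : ℕ) (ω : Fin (n - 1) → Fin n × Fin n) (s ℓ : ℕ) :
    Finset (Fin n) :=
  {j | chainMap n ω s j = ℓ}

section Trajectory

variable {n : ℕ} {ω : Fin (n - 1) → Fin n × Fin n}

lemma mergedAt_lt (hω : ValidSeq n ω) {s : ℕ} (hs : s < n - 1) :
    (mergedAt n ω s).1 < (mergedAt n ω s).2 ∧ (mergedAt n ω s).2 < n - s := by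
  simpa [mergedAt, hs] using hω ⟨s, hs⟩

lemma chainMap_succ {s : ℕ} (hs : s < n - 1) (i : Fin n) :
    chainMap n ω (s + 1) i = relabel n ω s (chainMap n ω s i) := by
  simp [chainMap, relabel, mergedAt, hs]

lemma chainMap_lt (hω : ValidSeq n ω) {s : ℕ} (hs : s ≤ n - 1) (i : Fin n) :
    chainMap n ω s i < n - s := by
  induction s with
  | zero => exact i.isLt
  | succ s ih =>
      obtain ⟨hab, hb⟩ := mergedAt_lt hω (s := s) (by omega)
      rw [chainMap_succ (by omega), relabel]
      have := collapse_lt hab hb (ih (by omega))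
      omega

lemma exists_chainMap_eq (hω : ValidSeq n ω) {s : ℕ} (hs : s ≤ n - 1) {y : ℕ}
    (hy : y < n - s) : ∃ i, chainMap n ω s i = y := by
  induction s generalizing y with
  | zero => exact ⟨⟨y, by omega⟩, rfl⟩
  | succ s ih =>
      obtain ⟨hab, hb⟩ := mergedAt_lt hω (s := s) (by omega)
      obtain ⟨x, hx, rfl⟩ := exists_collapse_eq (k := n - s) hab (by omega)
      obtain ⟨i, hi⟩ := ih (by omega) hx
      exact ⟨i, by rw [chainMap_succ (by omega), hi, relabel]⟩

lemma chainMap_add {t r : ℕ} (h : t + r ≤ n - 1) (i : Fin n) :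
    chainMap n ω (t + r) i = labelTrace n ω t (chainMap n ω t i) r := by
  induction r with
  | zero => rfl
  | succ r ih => rw [← add_assoc, chainMap_succ (by omega), ih (by omega), labelTrace]

lemma labelTrace_add (t ℓ r q : ℕ) :
    labelTrace n ω t ℓ (r + q) = labelTrace n ω (t + r) (labelTrace n ω t ℓ r) q := by
  induction q with
  | zero => rfl
  | succ q ih => rw [← add_assoc, labelTrace, ih, labelTrace, add_assoc]

lemma labelTrace_lt (hω : ValidSeq n ω) {t ℓ r : ℕ} (hℓ : ℓ < n - t) (h : t + r ≤ n - 1) :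
    labelTrace n ω t ℓ r < n - (t + r) := by
  induction r with
  | zero => exact hℓ
  | succ r ih =>
      obtain ⟨hab, hb⟩ := mergedAt_lt hω (s := t + r) (by omega)
      have := collapse_lt hab hb (ih (by omega))
      rw [labelTrace, relabel]
      omega

lemma survives_zero {t ℓ : ℕ} : Survives n ω t ℓ 0 := fun _ hr => absurd hr (Nat.not_lt_zero _)

lemma survives_succ {t ℓ m : ℕ} : Survives n ω t ℓ (m + 1) ↔ Survives n ω t ℓ m ∧
    labelTrace n ω t ℓ m ≠ (mergedAt n ω (t + m)).1 ∧
    labelTrace n ω t ℓ m ≠ (mergedAt n ω (t + m)).2 := by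
  simp only [Survives, Nat.lt_succ_iff_lt_or_eq, or_imp, forall_and, forall_eq,
    and_and_and_comm]

lemma mem_labelFiber {s ℓ : ℕ} {j : Fin n} : j ∈ labelFiber n ω s ℓ ↔ chainMap n ω s j = ℓ := by
  simp [labelFiber]

lemma labelFiber_nonempty (hω : ValidSeq n ω) {s ℓ : ℕ} (hs : s ≤ n - 1) (hℓ : ℓ < n - s) :
    (labelFiber n ω s ℓ).Nonempty :=
  (exists_chainMap_eq hω hs hℓ).imp fun _ => mem_labelFiber.2

lemma labelFiber_injOn (hω : ValidSeq n ω) {s : ℕ} (hs : s ≤ n - 1) :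
    Set.InjOn (labelFiber n ω s) (range (n - s)) := by
  intro ℓ hℓ ℓ' _ h
  obtain ⟨j, hj⟩ := labelFiber_nonempty hω hs (mem_range.1 hℓ)
  exact (mem_labelFiber.1 hj).symm.trans (mem_labelFiber.1 (h ▸ hj))

lemma labelFiber_subset {t ℓ m : ℕ} (h : t + m ≤ n - 1) :
    labelFiber n ω t ℓ ⊆ labelFiber n ω (t + m) (labelTrace n ω t ℓ m) := by
  intro j hj
  rw [mem_labelFiber] at hj ⊢
  rw [chainMap_add h, hj]

lemma labelFiber_subset_of_survives (hω : ValidSeq n ω) {t ℓ m : ℕ} (h : t + m ≤ n - 1)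
    (hsurv : Survives n ω t ℓ m) :
    labelFiber n ω (t + m) (labelTrace n ω t ℓ m) ⊆ labelFiber n ω t ℓ := by
  induction m with
  | zero => exact subset_rfl
  | succ m ih =>
      obtain ⟨hsurv, ha, hb⟩ := survives_succ.1 hsurv
      intro j hj
      rw [mem_labelFiber, ← add_assoc, chainMap_succ (by omega), labelTrace] at hj
      exact ih (by omega) hsurv <| mem_labelFiber.2 <|
        eq_of_collapse_eq (mergedAt_lt hω (by omega)).1 ha hb hj

lemma exists_chainMap_ne_of_merged (hω : ValidSeq n ω) {t ℓ m r : ℕ} (hℓ : ℓ < n - t)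
    (h : t + m ≤ n - 1) (hr : r < m)
    (hit : labelTrace n ω t ℓ r = (mergedAt n ω (t + r)).1 ∨
      labelTrace n ω t ℓ r = (mergedAt n ω (t + r)).2) :
    ∃ j, chainMap n ω (t + r) j ≠ labelTrace n ω t ℓ r ∧
      chainMap n ω (t + m) j = labelTrace n ω t ℓ m := by
  obtain ⟨hab, hb⟩ := mergedAt_lt hω (s := t + r) (by omega)
  have hx := labelTrace_lt hω hℓ (r := r) (by omega)
  -- the partner of `x ∈ {a, b}` is `a + b - x`
  obtain ⟨j, hj⟩ := exists_chainMap_eq hω (s := t + r)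
    (y := (mergedAt n ω (t + r)).1 + (mergedAt n ω (t + r)).2 - labelTrace n ω t ℓ r)
    (by omega) (by omega)
  refine ⟨j, by omega, ?_⟩
  obtain ⟨q, rfl⟩ : ∃ q, m = r + 1 + q := ⟨m - (r + 1), by omega⟩
  rw [← add_assoc, chainMap_add (by omega), ← add_assoc, chainMap_succ (by omega), hj, relabel,
    collapse_add_sub hab hit, labelTrace_add, labelTrace, add_assoc, relabel]

lemma labelFiber_eq_iff_survives (hω : ValidSeq n ω) {t ℓ m : ℕ} (hℓ : ℓ < n - t)
    (h : t + m ≤ n - 1) :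
    labelFiber n ω (t + m) (labelTrace n ω t ℓ m) = labelFiber n ω t ℓ ↔
      Survives n ω t ℓ m := by
  refine ⟨fun heq r hr => ?_, fun hsurv =>
    (labelFiber_subset_of_survives hω h hsurv).antisymm (labelFiber_subset h)⟩
  by_contra hit
  rw [not_and_or, not_ne_iff, not_ne_iff] at hit
  obtain ⟨j, hjr, hjm⟩ := exists_chainMap_ne_of_merged hω hℓ h hr hit
  have hj : j ∈ labelFiber n ω t ℓ := heq ▸ mem_labelFiber.2 hjm
  exact hjr (mem_labelFiber.1 (labelFiber_subset (m := r) (by omega) hj))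

lemma labelFiber_mem_image_iff (hω : ValidSeq n ω) {t ℓ m : ℕ} (hℓ : ℓ < n - t)
    (h : t + m ≤ n - 1) :
    labelFiber n ω t ℓ ∈ (range (n - (t + m))).image (labelFiber n ω (t + m)) ↔
      Survives n ω t ℓ m := by
  rw [← labelFiber_eq_iff_survives hω hℓ h, mem_image]
  constructor
  · rintro ⟨y, -, hy⟩
    obtain ⟨j, hj⟩ := labelFiber_nonempty hω (by omega) hℓ
    have hjy := mem_labelFiber.1 (hy ▸ hj)
    rwa [← hjy, mem_labelFiber.1 (labelFiber_subset h hj)] at hy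
  · exact fun heq => ⟨_, mem_range.2 (labelTrace_lt hω hℓ h), heq⟩

lemma blocksAt_eq_image (hω : ValidSeq n ω) {k : ℕ} (hk : 1 ≤ k) (hkn : k ≤ n) :
    blocksAt n ω k = (range k).image (labelFiber n ω (n - k)) := by
  ext B
  simp only [blocksAt, mem_image, mem_univ, true_and, mem_range]
  constructor
  · rintro ⟨i, rfl⟩
    exact ⟨chainMap n ω (n - k) i, by have := chainMap_lt hω (s := n - k) (by omega) i; omega,
      rfl⟩
  · rintro ⟨ℓ, hℓ, rfl⟩
    obtain ⟨i, hi⟩ := exists_chainMap_eq hω (s := n - k) (y := ℓ) (by omega) (by omega)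
    exact ⟨i, by simp only [blockOf, labelFiber, hi]⟩

lemma card_blocksAt_inter (hω : ValidSeq n ω) {k k' : ℕ} (hk' : 1 ≤ k') (hk'k : k' ≤ k)
    (hkn : k ≤ n) :
    #(blocksAt n ω k' ∩ blocksAt n ω k) = #{ℓ ∈ range k | Survives n ω (n - k) ℓ (k - k')} := by
  have hsteps : n - k' = n - k + (k - k') := by omega
  have hk : n - (n - k) = k := by omega
  rw [inter_comm, ← filter_mem_eq_inter, blocksAt_eq_image hω (by omega) hkn, filter_image,
    card_image_of_injOn ((labelFiber_injOn hω (by omega)).mono fun ℓ hℓ => by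
      rw [hk]; exact (mem_filter.1 hℓ).1),
    blocksAt_eq_image hω hk' (by omega)]
  refine congrArg card (filter_congr fun ℓ hℓ => ?_)
  rw [← labelFiber_mem_image_iff hω (by rw [hk]; exact mem_range.1 hℓ) (by omega), ← hsteps,
    show n - (n - k') = k' by omega]

end Trajectory

def orderedPairs (n k : ℕ) : Finset (Fin n × Fin n) :=
  {a | (a.1 : ℕ) < a.2 ∧ (a.2 : ℕ) < k}

section OrderedPairs

variable {n k : ℕ}

lemma mem_orderedPairs {a : Fin n × Fin n} :
    a ∈ orderedPairs n k ↔ (a.1 : ℕ) < a.2 ∧ (a.2 : ℕ) < k := by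
  simp [orderedPairs]

lemma card_orderedPairs (hk : k ≤ n) : #(orderedPairs n k) = k.choose 2 := by
  set L : Finset (Fin n) := {x | (x : ℕ) < k}
  have hpairs : orderedPairs n k = {a ∈ L ×ˢ L | a.1 < a.2} := by
    ext a
    simp only [mem_orderedPairs, mem_filter, mem_product, L, mem_univ, true_and, Fin.lt_def]
    omega
  rw [hpairs, card_product_filter_lt, Fin.card_filter_val_lt, min_eq_right hk]

lemma card_orderedPairs_avoiding (hk : k ≤ n) {y : ℕ} (hy : y < k) :
    #{a ∈ orderedPairs n k | y ≠ a.1 ∧ y ≠ a.2} = (k - 1).choose 2 := by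
  set L : Finset (Fin n) := {x | (x : ℕ) < k}
  have hyL : (⟨y, by omega⟩ : Fin n) ∈ L := by simpa [L]
  have hfilter : {a ∈ orderedPairs n k | y ≠ a.1 ∧ y ≠ a.2} =
      {a ∈ L.erase ⟨y, by omega⟩ ×ˢ L.erase ⟨y, by omega⟩ | a.1 < a.2} := by
    ext a
    simp only [mem_filter, mem_orderedPairs, mem_product, mem_erase, L, mem_univ, true_and,
      ne_eq, Fin.ext_iff, Fin.lt_def]
    omega
  rw [hfilter, card_product_filter_lt, card_erase_of_mem hyL, Fin.card_filter_val_lt,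
    min_eq_right hk]

end OrderedPairs

section Update

variable {n : ℕ} {ω : Fin (n - 1) → Fin n × Fin n}

lemma mem_coalSpace : ω ∈ coalSpace n ↔ ValidSeq n ω := by
  simp [coalSpace]

lemma coalSpace_nonempty (n : ℕ) : (coalSpace n).Nonempty := by
  by_cases hn : 2 ≤ n
  · refine ⟨fun _ => (⟨0, by omega⟩, ⟨1, by omega⟩), mem_coalSpace.2 fun s => ?_⟩
    have := s.isLt
    dsimp only
    omega
  · have : IsEmpty (Fin (n - 1)) := ⟨fun s => by have := s.isLt; omega⟩
    exact ⟨isEmptyElim, mem_coalSpace.2 isEmptyElim⟩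

lemma validSeq_update_iff (hω : ValidSeq n ω) (s : Fin (n - 1)) (a : Fin n × Fin n) :
    ValidSeq n (update ω s a) ↔ a ∈ orderedPairs n (n - s) := by
  rw [mem_orderedPairs]
  refine ⟨fun h => by simpa using h s, fun ha u => ?_⟩
  rcases eq_or_ne u s with rfl | hne
  · simpa using ha
  · simpa [update_of_ne hne] using hω u

lemma mergedAt_val (s : Fin (n - 1)) : mergedAt n ω s = (((ω s).1 : ℕ), ((ω s).2 : ℕ)) := by
  simp [mergedAt]

lemma mergedAt_update_of_ne {s : Fin (n - 1)} {u : ℕ} (h : u ≠ s) (a : Fin n × Fin n) :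
    mergedAt n (update ω s a) u = mergedAt n ω u := by
  unfold mergedAt
  split_ifs with hu
  · rw [update_of_ne (by simpa [Fin.ext_iff] using h)]
  · rfl

lemma labelTrace_update {s : Fin (n - 1)} {t ℓ r : ℕ} (h : t + r ≤ s) (a : Fin n × Fin n) :
    labelTrace n (update ω s a) t ℓ r = labelTrace n ω t ℓ r := by
  induction r with
  | zero => rfl
  | succ r ih =>
      rw [labelTrace, labelTrace, ih (by omega), relabel, relabel,
        mergedAt_update_of_ne (by omega)]

lemma survives_update {s : Fin (n - 1)} {t ℓ m : ℕ} (h : t + m ≤ s) (a : Fin n × Fin n) :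
    Survives n (update ω s a) t ℓ m ↔ Survives n ω t ℓ m := by
  refine forall₂_congr fun r hr => ?_
  rw [labelTrace_update (by omega), mergedAt_update_of_ne (by omega)]

end Update

section Probability

variable {n : ℕ}

/-- Whatever happened before step `t + m`, the pair merged at that step ranges over all
`(n - (t + m)).choose 2` pairs of current lineages, and `(n - (t + m) - 1).choose 2` of them
avoid the traced lineage. -/
lemma card_survives_succ {t ℓ m : ℕ} (hℓ : ℓ < n - t) (h : t + m < n - 1) :
    #{ω ∈ coalSpace n | Survives n ω t ℓ (m + 1)} * (n - (t + m)).choose 2 =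
      #{ω ∈ coalSpace n | Survives n ω t ℓ m} * (n - (t + m) - 1).choose 2 := by
  set s : Fin (n - 1) := ⟨t + m, h⟩
  have hcount := Finset.card_filter_update_mul_card (s := s) (P := orderedPairs n (n - (t + m)))
    (S := {ω ∈ coalSpace n | Survives n ω t ℓ m})
    (Q := fun ω a => labelTrace n ω t ℓ m ≠ a.1 ∧ labelTrace n ω t ℓ m ≠ a.2)
    (c := (n - (t + m) - 1).choose 2) ?_ ?_ ?_
  · rw [card_orderedPairs (by omega)] at hcount
    rw [← hcount]
    congr 2
    ext ω
    simp only [mem_filter, survives_succ, show mergedAt n ω (t + m) = _ from mergedAt_val s,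
      and_assoc]
  · intro ω hω a
    obtain ⟨hω, hsurv⟩ := mem_filter.1 hω
    rw [mem_filter, mem_coalSpace, validSeq_update_iff (mem_coalSpace.1 hω) s a,
      survives_update (t := t) (m := m) (s := s) le_rfl]
    exact and_iff_left hsurv
  · intro ω a
    funext b
    rw [labelTrace_update (s := s) (t := t) (r := m) le_rfl]
  · intro ω hω
    exact card_orderedPairs_avoiding (k := n - (t + m)) (by omega)
      (labelTrace_lt (mem_coalSpace.1 (mem_filter.1 hω).1) hℓ h.le)

lemma card_survives {k ℓ m : ℕ} (hkn : k ≤ n) (hℓ : ℓ < k) (hm : m < k) :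
    #{ω ∈ coalSpace n | Survives n ω (n - k) ℓ m} * k.choose 2 =
      #(coalSpace n) * (k - m).choose 2 := by
  induction m with
  | zero =>
      rw [filter_true_of_mem fun ω _ => survives_zero, Nat.sub_zero]
  | succ m ih =>
      have hstep := card_survives_succ (n := n) (t := n - k) (ℓ := ℓ) (m := m) (by omega) (by omega)
      rw [show n - (n - k + m) = k - m by omega] at hstep
      refine Nat.eq_of_mul_eq_mul_right (Nat.choose_pos (show 2 ≤ k - m by omega)) ?_
      calc _ = #{ω ∈ coalSpace n | Survives n ω (n - k) ℓ (m + 1)} * (k - m).choose 2 *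
              k.choose 2 := by ring
        _ = #(coalSpace n) * (k - m).choose 2 * (k - m - 1).choose 2 := by
              rw [hstep, mul_right_comm, ih (by omega)]
        _ = _ := by rw [Nat.sub_add_eq]; ring

lemma coalP_survives_mul_choose {k ℓ m : ℕ} (hkn : k ≤ n) (hℓ : ℓ < k) (hm : m < k) :
    coalP n (fun ω => Survives n ω (n - k) ℓ m) * k.choose 2 = (k - m).choose 2 := by
  have hcard : (#(coalSpace n) : ℝ) ≠ 0 := by
    exact_mod_cast (coalSpace_nonempty n).card_pos.ne'
  rw [coalP, div_mul_eq_mul_div, div_eq_iff hcard]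
  exact_mod_cast (card_survives hkn hℓ hm).trans (mul_comm _ _)

lemma coalE_eq_sum_coalP {ι : Type*} (s : Finset ι)
    (A : ι → (Fin (n - 1) → Fin n × Fin n) → Prop) (X : (Fin (n - 1) → Fin n × Fin n) → ℝ)
    (hX : ∀ ω ∈ coalSpace n, X ω = #{x ∈ s | A x ω}) :
    coalE n X = ∑ x ∈ s, coalP n (A x) := by
  simp only [coalE, coalP, ← sum_div]
  congr 1
  rw [sum_congr rfl hX]
  simp only [card_filter, Nat.cast_sum, Nat.cast_ite, Nat.cast_one, Nat.cast_zero]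
  rw [sum_comm]

end Probability

theorem yule_fmat_expectation_general (n i j : ℕ)
    (hj : 1 ≤ j) (hji : j ≤ i) (hi : i ≤ n - 1) :
    coalE n (fun ω => (FmatOf n ω i j : ℝ)) = (j : ℝ) * ((j : ℝ) + 1) / (i : ℝ) := by
  have hF : ∀ ω ∈ coalSpace n, (FmatOf n ω i j : ℝ) =
      #{ℓ ∈ range (i + 1) | Survives n ω (n - (i + 1)) ℓ (i + 1 - (j + 1))} := fun ω hω => by
    rw [FmatOf, card_blocksAt_inter (mem_coalSpace.1 hω) (by omega) (by omega) (by omega)]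
  have hchoose : ((i + 1).choose 2 : ℝ) ≠ 0 := by
    exact_mod_cast (Nat.choose_pos (by omega)).ne'
  have hP : ∀ ℓ ∈ range (i + 1), coalP n (fun ω => Survives n ω (n - (i + 1)) ℓ (i + 1 - (j + 1)))
      = (j + 1).choose 2 / (i + 1).choose 2 := fun ℓ hℓ => by
    rw [eq_div_iff hchoose, coalP_survives_mul_choose (by omega) (mem_range.1 hℓ) (by omega),
      show i + 1 - (i + 1 - (j + 1)) = j + 1 by omega]
  rw [coalE_eq_sum_coalP _ _ _ hF, sum_congr rfl hP, sum_const, card_range, nsmul_eq_mul,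
    Nat.cast_choose_two, Nat.cast_choose_two]
  have hi0 : (i : ℝ) ≠ 0 := by exact_mod_cast (show i ≠ 0 by omega)
  simp only [Nat.cast_add, Nat.cast_one, add_sub_cancel_right]
  field_simp

/-- Under the Yule (Kingman coalescent) distribution on ranked
tree shapes with `n` leaves, `E[F_{ij}] = j(j+1)/i` for `1 ≤ j ≤ i ≤ n-1`. -/
theorem yule_fmat_expectation (n i j : ℕ) (hn : 2 ≤ n)
    (hj : 1 ≤ j) (hji : j ≤ i) (hi : i ≤ n - 1) :
    coalE n (fun ω => (FmatOf n ω i j : ℝ)) = (j : ℝ) * ((j : ℝ) + 1) / (i : ℝ) :=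
  yule_fmat_expectation_general n i j hj hji hi
end
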